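/- Let w be a non-negative log-concave sequence with w_0·w_1 > 0 and finite support {0,1,...,r} with r ≥ 1. For ℓ ∈ {0,...,r-1} let w^{+ℓ} = (w_ℓ, w_{ℓ+1},...) and set Z_n^{(ℓ)} = Σ_{i≥0} w_{i+ℓ}·f_{n,i}^w (the partition function for compositions with a-weights w^{+ℓ}), where f_{n,0}^w = 1 if n = 0 and 0 otherwise. Then for all n ≥ 1 and 0 ≤ ℓ ≤ r-2: Z_{n+1}^{(ℓ+1)}·Z_n^{(ℓ)} ≤ Z_{n+1}^{(ℓ)}·Z_n^{(ℓ+1)}. -/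

import Mathlib

/-- Rooted plane trees: a node together with its ordered list of subtrees. -/
inductive PlaneTree where
  | node : List PlaneTree → PlaneTree

/-- Number of vertices of a plane tree. -/
def PlaneTree.size : PlaneTree → ℕ
  | .node l => 1 + (l.attach.map (fun t => PlaneTree.size t.1)).sum
decreasing_by
  have := List.sizeOf_lt_of_mem t.2
  simp only [PlaneTree.node.sizeOf_spec]
  omega

/-- The weight `ω(T) = ∏_{u ∈ T} w_{k_u(T)}` of a plane tree. -/
noncomputable def omegaW (w : ℕ → ℝ) : PlaneTree → ℝ
  | .node l => w l.length * (l.attach.map (fun t => omegaW w t.1)).prod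
decreasing_by
  have := List.sizeOf_lt_of_mem t.2
  simp only [PlaneTree.node.sizeOf_spec]
  omega

/-- `b_n^w`: total `w`-weight of plane trees with `n` vertices. -/
noncomputable def bW (w : ℕ → ℝ) (n : ℕ) : ℝ :=
  ∑' T : {T : PlaneTree // T.size = n}, omegaW w (T : PlaneTree)

/-- `f_{n,k}^w`: total `w`-weight of ordered forests of `k` plane trees
with `n` vertices in total. -/
noncomputable def fW (w : ℕ → ℝ) (n k : ℕ) : ℝ :=
  ∑' F : {l : List PlaneTree // l.length = k ∧ (l.map PlaneTree.size).sum = n},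
    ((F : List PlaneTree).map (omegaW w)).prod

/-- The partition function `Z_n^{w^{+ℓ},b} = Σ_{i≥0} w_{i+ℓ}·f_{n,i}^w`. -/
noncomputable def Zshift (w : ℕ → ℝ) (ℓ n : ℕ) : ℝ :=
  ∑' i : ℕ, w (i + ℓ) * fW w n i

lemma size_node (c : List PlaneTree) :
    (PlaneTree.node c).size = 1 + (c.map PlaneTree.size).sum := by
  rw [PlaneTree.size]
  congr 1
  exact congrArg List.sum (List.attach_map_val (l := c) (f := PlaneTree.size))

lemma omega_node (w : ℕ → ℝ) (c : List PlaneTree) :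
    omegaW w (PlaneTree.node c) = w c.length * (c.map (omegaW w)).prod := by
  rw [omegaW]
  congr 1
  exact congrArg List.prod (List.attach_map_val (l := c) (f := omegaW w))

lemma size_pos (T : PlaneTree) : 1 ≤ T.size := by
  cases T with
  | node c => rw [size_node]; omega

lemma length_le_sum (l : List PlaneTree) : l.length ≤ (l.map PlaneTree.size).sum := by
  induction l with
  | nil => simp
  | cons hd tl ih =>
    have := size_pos hd
    simp only [List.length_cons, List.map_cons, List.sum_cons]
    omega

lemma sum_sizes_eq_zero {l : List PlaneTree} (h : (l.map PlaneTree.size).sum = 0) :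
    l = [] := by
  cases l with
  | nil => rfl
  | cons hd tl =>
    have := size_pos hd
    simp only [List.map_cons, List.sum_cons] at h
    omega

lemma omegaW_nonneg (w : ℕ → ℝ) (hnn : ∀ i, 0 ≤ w i) (T : PlaneTree) :
    0 ≤ omegaW w T := by
  have key : ∀ N (T : PlaneTree), T.size ≤ N → 0 ≤ omegaW w T := by
    intro N
    induction N with
    | zero => intro T hT; have := size_pos T; omega
    | succ N ih =>
      intro T hT
      cases T with
      | node c =>
        rw [omega_node]
        refine mul_nonneg (hnn _) (List.prod_nonneg ?_)
        intro x hx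
        obtain ⟨t, ht, rfl⟩ := List.mem_map.1 hx
        refine ih t ?_
        have h1 : t.size ≤ (c.map PlaneTree.size).sum :=
          List.single_le_sum (fun x _ => Nat.zero_le x) _ (List.mem_map_of_mem ht)
        rw [size_node] at hT
        omega
  exact key T.size T le_rfl



/-- Ordered forests with `k` trees and `n` total vertices. -/
abbrev Forest (n k : ℕ) : Type :=
  {l : List PlaneTree // l.length = k ∧ (l.map PlaneTree.size).sum = n}

/-- Root-decomposition map: `(m, l') ↦ node (take m l') :: drop m l'`. -/
def uf (n k : ℕ) (x : Σ m : Fin (n + 2), Forest n (k + m)) : Forest (n + 1) (k + 1) := by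
  refine ⟨PlaneTree.node (x.2.1.take x.1) :: x.2.1.drop x.1, ?_, ?_⟩
  · have h1 := x.2.2.1
    simp only [List.length_cons, List.length_drop, h1]
    omega
  · have h2 := x.2.2.2
    have hsplit : ((x.2.1.take x.1.1).map PlaneTree.size).sum
        + ((x.2.1.drop x.1.1).map PlaneTree.size).sum = (x.2.1.map PlaneTree.size).sum := by
      rw [← List.sum_append, ← List.map_append, List.take_append_drop]
    simp only [List.map_cons, List.sum_cons, size_node]
    omega

lemma uf_bij (n k : ℕ) : Function.Bijective (uf n k) := by
  constructor
  · rintro ⟨⟨m1, hm1⟩, ⟨l1, hl1, hs1⟩⟩ ⟨⟨m2, hm2⟩, ⟨l2, hl2, hs2⟩⟩ h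
    have h' := congrArg Subtype.val h
    simp only [uf, List.cons.injEq, PlaneTree.node.injEq] at h'
    have hl1' : l1.length = k + m1 := hl1
    have hl2' : l2.length = k + m2 := hl2
    have ht1 : (l1.take m1).length = m1 := by
      rw [List.length_take]; omega
    have ht2 : (l2.take m2).length = m2 := by
      rw [List.length_take]; omega
    have hm : m1 = m2 := by rw [← ht1, ← ht2, h'.1]
    subst hm
    have hl : l1 = l2 := by
      rw [← List.take_append_drop m1 l1, ← List.take_append_drop m1 l2, h'.1, h'.2]
    subst hl
    rfl
  · rintro ⟨l, hl, hs⟩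
    cases l with
    | nil => simp at hl
    | cons hd t =>
      cases hd with
      | node c =>
        have hlen : t.length = k := by simpa using hl
        have hsum : 1 + (c.map PlaneTree.size).sum + (t.map PlaneTree.size).sum = n + 1 := by
          simp only [List.map_cons, List.sum_cons, size_node] at hs
          omega
        have hcle : c.length ≤ n := by
          have := length_le_sum c
          omega
        refine ⟨⟨⟨c.length, by omega⟩, ⟨c ++ t, by simp [hlen, Nat.add_comm], by
          simp only [List.map_append, List.sum_append]; omega⟩⟩, ?_⟩
        apply Subtype.ext
        simp only [uf, List.take_left, List.drop_left]

noncomputable def forestEquiv (n k : ℕ) :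
    (Σ m : Fin (n + 2), Forest n (k + m)) ≃ Forest (n + 1) (k + 1) :=
  Equiv.ofBijective _ (uf_bij n k)

theorem forest_finite : ∀ n k, Finite (Forest n k) := by
  intro n
  induction n using Nat.strong_induction_on with
  | _ n IH =>
    match n with
    | 0 =>
      intro k
      have : Subsingleton (Forest 0 k) := by
        constructor
        rintro ⟨l1, h1a, h1b⟩ ⟨l2, h2a, h2b⟩
        have e1 := sum_sizes_eq_zero h1b
        have e2 := sum_sizes_eq_zero h2b
        subst e1; subst e2; rfl
      exact Finite.of_subsingleton
    | n + 1 =>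
      intro k
      match k with
      | 0 =>
        have : Subsingleton (Forest (n + 1) 0) := by
          constructor
          rintro ⟨l1, h1a, h1b⟩ ⟨l2, h2a, h2b⟩
          have e1 : l1 = [] := List.length_eq_zero_iff.mp h1a
          have e2 : l2 = [] := List.length_eq_zero_iff.mp h2a
          subst e1; subst e2; rfl
        exact Finite.of_subsingleton
      | k + 1 =>
        have : ∀ m : Fin (n + 2), Finite (Forest n (k + m)) :=
          fun m => IH n (Nat.lt_succ_self n) (k + m)
        exact Finite.of_equiv _ (forestEquiv n k)

instance (n k : ℕ) : Finite (Forest n k) := forest_finite n k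

lemma fW_def' (w : ℕ → ℝ) (n k : ℕ) :
    fW w n k = ∑' F : Forest n k, ((F : List PlaneTree).map (omegaW w)).prod := rfl

lemma fW_vanish (w : ℕ → ℝ) {n k : ℕ} (h : n < k) : fW w n k = 0 := by
  have : IsEmpty (Forest n k) := by
    constructor
    rintro ⟨l, hl, hs⟩
    have := length_le_sum l
    omega
  rw [fW_def']
  exact tsum_empty

lemma fW_zero_of_pos (w : ℕ → ℝ) (n : ℕ) : fW w (n + 1) 0 = 0 := by
  have : IsEmpty (Forest (n + 1) 0) := by
    constructor
    rintro ⟨l, hl, hs⟩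
    have e1 : l = [] := List.length_eq_zero_iff.mp hl
    subst e1
    simp at hs
  rw [fW_def']
  exact tsum_empty

lemma fW_nonneg (w : ℕ → ℝ) (hnn : ∀ i, 0 ≤ w i) (n k : ℕ) : 0 ≤ fW w n k := by
  rw [fW_def']
  refine tsum_nonneg fun F => List.prod_nonneg ?_
  intro x hx
  obtain ⟨t, _, rfl⟩ := List.mem_map.1 hx
  exact omegaW_nonneg w hnn t

lemma fW_rec_base (w : ℕ → ℝ) (n k : ℕ) :
    fW w (n + 1) (k + 1) = ∑ m ∈ Finset.range (n + 2), w m * fW w n (k + m) := by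
  have h1 : fW w (n + 1) (k + 1)
      = ∑' x : Σ m : Fin (n + 2), Forest n (k + m),
          w x.1 * ((x.2.1.map (omegaW w)).prod) := by
    rw [fW_def', ← (forestEquiv n k).tsum_eq]
    congr 1
    funext x
    show ((uf n k x).1.map (omegaW w)).prod = _
    obtain ⟨⟨m, hm⟩, ⟨l', hl, hs⟩⟩ := x
    have hl' : l'.length = k + m := hl
    simp only [uf, List.map_cons, List.prod_cons, omega_node]
    have htk : (l'.take m).length = m := by
      rw [List.length_take]; omega
    have hsplit : ((l'.take m).map (omegaW w)).prod * ((l'.drop m).map (omegaW w)).prod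
        = (l'.map (omegaW w)).prod := by
      rw [← List.prod_append, ← List.map_append, List.take_append_drop]
    rw [htk]
    show w m * ((l'.take m).map (omegaW w)).prod * ((l'.drop m).map (omegaW w)).prod = _
    rw [mul_assoc, hsplit]
  rw [h1, Summable.tsum_sigma Summable.of_finite]
  have h2 : ∀ m : Fin (n + 2),
      (∑' y : Forest n (k + m), w m.1 * ((y.1.map (omegaW w)).prod))
        = w m.1 * fW w n (k + m.1) := by
    intro m
    rw [fW_def']
    exact tsum_mul_left
  rw [tsum_fintype]
  rw [Finset.sum_congr rfl (fun m _ => h2 m)]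
  exact Fin.sum_univ_eq_sum_range (fun m => w m * fW w n (k + m)) (n + 2)

lemma fW_rec (w : ℕ → ℝ) (n k N : ℕ) (h : n + 2 ≤ N) :
    fW w (n + 1) (k + 1) = ∑ m ∈ Finset.range N, w m * fW w n (k + m) := by
  rw [fW_rec_base]
  refine Finset.sum_subset (Finset.range_subset_range.2 h) ?_
  intro m hm hnm
  simp only [Finset.mem_range] at hm hnm
  rw [fW_vanish w (by omega), mul_zero]

lemma Zshift_eq_sum (w : ℕ → ℝ) (ℓ n N : ℕ) (h : n < N) :
    Zshift w ℓ n = ∑ i ∈ Finset.range N, w (i + ℓ) * fW w n i := by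
  refine tsum_eq_sum fun i hi => ?_
  simp only [Finset.mem_range] at hi
  rw [fW_vanish w (by omega), mul_zero]

section LC
variable {w : ℕ → ℝ} {r : ℕ}
variable (hnn : ∀ i, 0 ≤ w i)
  (hlc : ∀ i : ℕ, 1 ≤ i → w (i - 1) * w (i + 1) ≤ (w i) ^ 2)
  (hsupp : ∀ i : ℕ, w i ≠ 0 ↔ i ≤ r)

include hnn hsupp in
lemma w_pos {i : ℕ} (h : i ≤ r) : 0 < w i :=
  lt_of_le_of_ne (hnn i) (Ne.symm ((hsupp i).2 h))

include hnn hlc hsupp in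
lemma W1' : ∀ u a, a + u + 1 ≤ r → w a * w (a + u + 1) ≤ w (a + 1) * w (a + u) := by
  intro u
  induction u with
  | zero => intro a _; rw [mul_comm]; simp [mul_comm]
  | succ u ih =>
    intro a h
    have hpu : 0 < w (a + u) := w_pos hnn hsupp (by omega)
    have hpu1 : 0 < w (a + u + 1) := w_pos hnn hsupp (by omega)
    have hIH := ih a (by omega)
    have hL := hlc (a + u + 1) (by omega)
    have e1 : a + u + 1 - 1 = a + u := by omega
    rw [e1] at hL
    have key : (w a * w (a + u + 1 + 1)) * (w (a + u) * w (a + u + 1))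
        ≤ (w (a + 1) * w (a + u + 1)) * (w (a + u) * w (a + u + 1)) := by
      have h1 : (w a * w (a + u + 1 + 1)) * (w (a + u) * w (a + u + 1))
          = (w a * w (a + u + 1)) * (w (a + u) * w (a + u + 1 + 1)) := by ring
      have h2 : (w (a + 1) * w (a + u + 1)) * (w (a + u) * w (a + u + 1))
          = (w (a + 1) * w (a + u)) * (w (a + u + 1) ^ 2) := by ring
      rw [h1, h2]
      refine mul_le_mul hIH hL (mul_nonneg (hnn _) (hnn _)) (mul_nonneg (hnn _) (hnn _))
    have e2 : a + (u + 1) + 1 = a + u + 1 + 1 := by omega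
    have e3 : a + (u + 1) = a + u + 1 := by omega
    rw [e2, e3]
    exact le_of_mul_le_mul_right key (mul_pos hpu hpu1)

include hnn hlc hsupp in
lemma W1 : ∀ a u, w a * w (a + u + 1) ≤ w (a + 1) * w (a + u) := by
  intro a u
  by_cases h : a + u + 1 ≤ r
  · exact W1' hnn hlc hsupp u a h
  · have : w (a + u + 1) = 0 := by
      by_contra hne
      exact h ((hsupp _).1 hne)
    rw [this, mul_zero]
    exact mul_nonneg (hnn _) (hnn _)

include hnn hlc hsupp in
lemma W2' : ∀ t l c, w l * w (l + 2 * t + c) ≤ w (l + t) * w (l + t + c) := by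
  intro t
  induction t with
  | zero => intro l c; simp
  | succ t ih =>
    intro l c
    have h1 : w l * w (l + (2 * t + c + 1) + 1) ≤ w (l + 1) * w (l + (2 * t + c + 1)) :=
      W1 hnn hlc hsupp l (2 * t + c + 1)
    have h2 := ih (l + 1) c
    have e1 : l + 2 * (t + 1) + c = l + (2 * t + c + 1) + 1 := by omega
    have e2 : l + 1 + 2 * t + c = l + (2 * t + c + 1) := by omega
    have e3 : l + (t + 1) = l + 1 + t := by omega
    rw [e1, e3]
    rw [e2] at h2
    exact le_trans h1 h2

include hnn hlc hsupp in
lemma W3 : ∀ l d u, w l * w (l + d + u) ≤ w (l + d) * w (l + u) := by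
  intro l d u
  rcases le_total d u with h | h
  · have := W2' hnn hlc hsupp d l (u - d)
    have e1 : l + 2 * d + (u - d) = l + d + u := by omega
    have e2 : l + d + (u - d) = l + u := by omega
    rwa [e1, e2] at this
  · have := W2' hnn hlc hsupp u l (d - u)
    have e1 : l + 2 * u + (d - u) = l + d + u := by omega
    have e2 : l + u + (d - u) = l + d := by omega
    rw [e1, e2] at this
    rw [mul_comm (w (l + d)) (w (l + u))]
    exact this

end LC

section TP2
variable {w : ℕ → ℝ} {r : ℕ}
variable (hnn : ∀ i, 0 ≤ w i)
  (hlc : ∀ i : ℕ, 1 ≤ i → w (i - 1) * w (i + 1) ≤ (w i) ^ 2)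
  (hsupp : ∀ i : ℕ, w i ≠ 0 ↔ i ≤ r)

include hnn hlc hsupp in
lemma fW_tp2 : ∀ n i j, i ≤ j → fW w (n + 1) i * fW w n j ≤ fW w n i * fW w (n + 1) j := by
  intro n
  induction n with
  | zero =>
    intro i j hij
    rcases eq_or_lt_of_le hij with rfl | hlt
    · exact le_of_eq (mul_comm _ _)
    · rw [fW_vanish w (show 0 < j by omega), mul_zero]
      exact mul_nonneg (fW_nonneg w hnn _ _) (fW_nonneg w hnn _ _)
  | succ n IH =>
    intro i j hij
    rcases eq_or_lt_of_le hij with rfl | hlt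
    · exact le_of_eq (mul_comm _ _)
    cases i with
    | zero =>
      rw [fW_zero_of_pos, zero_mul]
      exact mul_nonneg (fW_nonneg w hnn _ _) (fW_nonneg w hnn _ _)
    | succ a =>
      obtain ⟨d, rfl⟩ : ∃ d, j = (a + (d + 1)) + 1 := ⟨j - a - 2, by omega⟩
      set b := a + (d + 1) with hb
      set N := n + 4 + d with hN
      have hA : fW w (n + 1 + 1) (a + 1) = ∑ m ∈ Finset.range N, w m * fW w (n + 1) (a + m) :=
        fW_rec w (n + 1) a N (by omega)
      have hB : fW w (n + 1) (b + 1) = ∑ l ∈ Finset.range N, w l * fW w n (b + l) :=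
        fW_rec w n b N (by omega)
      have hC : fW w (n + 1) (a + 1) = ∑ m ∈ Finset.range N, w m * fW w n (a + m) :=
        fW_rec w n a N (by omega)
      have hD : fW w (n + 1 + 1) (b + 1) = ∑ l ∈ Finset.range N, w l * fW w (n + 1) (b + l) :=
        fW_rec w (n + 1) b N (by omega)
      rw [hA, hB, hC, hD]
      rw [← sub_nonneg]
      set q : ℕ → ℕ → ℝ :=
        fun x y => fW w n x * fW w (n + 1) y - fW w (n + 1) x * fW w n y with hq
      have hqpos : ∀ x y, x ≤ y → 0 ≤ q x y := by
        intro x y hxy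
        have h0 := IH x y hxy
        simp only [hq]
        nlinarith [h0]
      set S : Finset (ℕ × ℕ) := Finset.range N ×ˢ Finset.range N with hS
      set T : ℕ × ℕ → ℝ := fun p => w p.1 * w p.2 * q (a + p.1) (b + p.2) with hT
      have hsum : (∑ m ∈ Finset.range N, w m * fW w n (a + m)) *
            (∑ l ∈ Finset.range N, w l * fW w (n + 1) (b + l)) -
          (∑ m ∈ Finset.range N, w m * fW w (n + 1) (a + m)) *
            (∑ l ∈ Finset.range N, w l * fW w n (b + l)) = ∑ p ∈ S, T p := by
        rw [Finset.sum_mul_sum, Finset.sum_mul_sum]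
        rw [hS, Finset.sum_product]
        rw [← Finset.sum_sub_distrib]
        refine Finset.sum_congr rfl fun m _ => ?_
        rw [← Finset.sum_sub_distrib]
        refine Finset.sum_congr rfl fun l _ => ?_
        simp only [hT, hq]
        ring
      rw [hsum]
      -- split into good and bad parts
      set P : ℕ × ℕ → Prop := fun p => p.2 + (d + 1) < p.1 with hP
      have hPd : DecidablePred P := fun p => Nat.decLt _ _
      set Bf : Finset (ℕ × ℕ) := S.filter P with hBf
      set Gf : Finset (ℕ × ℕ) := S.filter (fun p => ¬ P p) with hGf
      have hsplit : ∑ p ∈ S, T p = ∑ p ∈ Gf, T p + ∑ p ∈ Bf, T p := by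
        rw [hGf, hBf, add_comm]
        exact (Finset.sum_filter_add_sum_filter_not S P T).symm
      set ψ : ℕ × ℕ → ℕ × ℕ := fun p => (p.2 + (d + 1), p.1 - (d + 1)) with hψ
      set Df : Finset (ℕ × ℕ) := Bf.image ψ with hDf
      have hmemB : ∀ p ∈ Bf, (p.1 < N ∧ p.2 < N) ∧ p.2 + (d + 1) < p.1 := by
        intro p hp
        rw [hBf, Finset.mem_filter, hS, Finset.mem_product, Finset.mem_range,
          Finset.mem_range] at hp
        exact hp
      have hinj : ∀ p ∈ Bf, ∀ p' ∈ Bf, ψ p = ψ p' → p = p' := by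
        intro p hp p' hp' he
        have h1 := (hmemB p hp).2
        have h2 := (hmemB p' hp').2
        rw [hψ, Prod.mk.injEq] at he
        have : p.1 = p'.1 ∧ p.2 = p'.2 := by omega
        exact Prod.ext this.1 this.2
      have hDfG : Df ⊆ Gf := by
        intro p' hp'
        rw [hDf, Finset.mem_image] at hp'
        obtain ⟨p, hp, rfl⟩ := hp'
        obtain ⟨⟨hp1, hp2⟩, hpb⟩ := hmemB p hp
        rw [hGf, Finset.mem_filter, hS, Finset.mem_product, Finset.mem_range, Finset.mem_range]
        simp only [hψ, hP]
        omega
      have hkey1 : ∑ p ∈ Df, T p + ∑ p ∈ Bf, T p = ∑ p ∈ Bf, (T (ψ p) + T p) := by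
        rw [hDf, Finset.sum_image hinj, ← Finset.sum_add_distrib]
      have hkey2 : ∀ p ∈ Bf, 0 ≤ T (ψ p) + T p := by
        intro p hp
        obtain ⟨⟨hp1, hp2⟩, hpb⟩ := hmemB p hp
        have e1 : a + (p.2 + (d + 1)) = b + p.2 := by omega
        have e2 : b + (p.1 - (d + 1)) = a + p.1 := by omega
        have hTψ : T (ψ p) = -(w (p.2 + (d + 1)) * w (p.1 - (d + 1)) * q (a + p.1) (b + p.2)) := by
          simp only [hT, hψ, hq, e1, e2]
          ring
        have hqneg : q (a + p.1) (b + p.2) ≤ 0 := by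
          have h0 := hqpos (b + p.2) (a + p.1) (by omega)
          simp only [hq] at h0 ⊢
          nlinarith [h0]
        have hwle : w p.1 * w p.2 ≤ w (p.2 + (d + 1)) * w (p.1 - (d + 1)) := by
          have h3 := W3 hnn hlc hsupp p.2 (d + 1) (p.1 - p.2 - (d + 1))
          have e3 : p.2 + (d + 1) + (p.1 - p.2 - (d + 1)) = p.1 := by omega
          have e4 : p.2 + (p.1 - p.2 - (d + 1)) = p.1 - (d + 1) := by omega
          rw [e3, e4] at h3
          nlinarith [h3]
        have : T (ψ p) + T p
            = -((w (p.2 + (d + 1)) * w (p.1 - (d + 1)) - w p.1 * w p.2)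
               * q (a + p.1) (b + p.2)) := by
          rw [hTψ]; simp only [hT]; ring
        rw [this]
        rw [neg_nonneg]
        exact mul_nonpos_of_nonneg_of_nonpos (by nlinarith [hwle]) hqneg
      have hkey3 : ∀ p ∈ Gf, 0 ≤ T p := by
        intro p hp
        rw [hGf, Finset.mem_filter] at hp
        have hng : ¬ P p := hp.2
        rw [hP] at hng
        push_neg at hng
        refine mul_nonneg (mul_nonneg (hnn _) (hnn _)) (hqpos _ _ (by omega))
      calc (0:ℝ) ≤ ∑ p ∈ Gf \ Df, T p + ∑ p ∈ Bf, (T (ψ p) + T p) := by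
              refine add_nonneg (Finset.sum_nonneg fun p hp =>
                hkey3 p (Finset.mem_sdiff.1 hp).1) (Finset.sum_nonneg hkey2)
        _ = ∑ p ∈ Gf \ Df, T p + (∑ p ∈ Df, T p + ∑ p ∈ Bf, T p) := by rw [hkey1]
        _ = (∑ p ∈ Gf \ Df, T p + ∑ p ∈ Df, T p) + ∑ p ∈ Bf, T p := by ring
        _ = ∑ p ∈ Gf, T p + ∑ p ∈ Bf, T p := by rw [Finset.sum_sdiff hDfG]
        _ = ∑ p ∈ S, T p := hsplit.symm

end TP2

theorem stmt13' (w : ℕ → ℝ) (hnn : ∀ i, 0 ≤ w i)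
    (hlc : ∀ i : ℕ, 1 ≤ i → w (i - 1) * w (i + 1) ≤ (w i) ^ 2)
    (r : ℕ) (hsupp : ∀ i : ℕ, w i ≠ 0 ↔ i ≤ r)
    (n : ℕ) (ℓ : ℕ) :
    Zshift w (ℓ + 1) (n + 1) * Zshift w ℓ n ≤ Zshift w ℓ (n + 1) * Zshift w (ℓ + 1) n := by
  set N := n + 2 with hN
  have z1 : Zshift w (ℓ + 1) (n + 1)
      = ∑ i ∈ Finset.range N, w (i + (ℓ + 1)) * fW w (n + 1) i :=
    Zshift_eq_sum w (ℓ + 1) (n + 1) N (by omega)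
  have z2 : Zshift w ℓ n = ∑ j ∈ Finset.range N, w (j + ℓ) * fW w n j :=
    Zshift_eq_sum w ℓ n N (by omega)
  have z3 : Zshift w ℓ (n + 1) = ∑ i ∈ Finset.range N, w (i + ℓ) * fW w (n + 1) i :=
    Zshift_eq_sum w ℓ (n + 1) N (by omega)
  have z4 : Zshift w (ℓ + 1) n = ∑ j ∈ Finset.range N, w (j + (ℓ + 1)) * fW w n j :=
    Zshift_eq_sum w (ℓ + 1) n N (by omega)
  rw [z1, z2, z3, z4, ← sub_nonneg]
  set S : Finset (ℕ × ℕ) := Finset.range N ×ˢ Finset.range N with hS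
  set C : ℕ × ℕ → ℝ := fun p =>
    (w (p.1 + ℓ) * w (p.2 + (ℓ + 1)) - w (p.1 + (ℓ + 1)) * w (p.2 + ℓ))
      * (fW w (n + 1) p.1 * fW w n p.2) with hC
  have hsum : (∑ i ∈ Finset.range N, w (i + ℓ) * fW w (n + 1) i) *
        (∑ j ∈ Finset.range N, w (j + (ℓ + 1)) * fW w n j) -
      (∑ i ∈ Finset.range N, w (i + (ℓ + 1)) * fW w (n + 1) i) *
        (∑ j ∈ Finset.range N, w (j + ℓ) * fW w n j) = ∑ p ∈ S, C p := by
    rw [Finset.sum_mul_sum, Finset.sum_mul_sum, hS, Finset.sum_product,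
      ← Finset.sum_sub_distrib]
    refine Finset.sum_congr rfl fun i _ => ?_
    rw [← Finset.sum_sub_distrib]
    refine Finset.sum_congr rfl fun j _ => ?_
    simp only [hC]
    ring
  rw [hsum]
  set P : ℕ × ℕ → Prop := fun p => p.1 < p.2 with hP
  set Uf : Finset (ℕ × ℕ) := S.filter P with hUf
  set Bf : Finset (ℕ × ℕ) := S.filter (fun p => p.2 < p.1) with hBf
  have hsplit : ∑ p ∈ S, C p = ∑ p ∈ Uf, C p + ∑ p ∈ Bf, C p := by
    have h1 : ∑ p ∈ Uf, C p + ∑ p ∈ S.filter (fun p => ¬ P p), C p = ∑ p ∈ S, C p :=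
      Finset.sum_filter_add_sum_filter_not S P C
    have h2 : ∑ p ∈ Bf, C p = ∑ p ∈ S.filter (fun p => ¬ P p), C p := by
      refine Finset.sum_subset ?_ ?_
      · intro p hp
        rw [hBf, Finset.mem_filter] at hp
        rw [Finset.mem_filter]
        exact ⟨hp.1, by simp only [hP]; omega⟩
      · intro p hpt hps
        rw [Finset.mem_filter] at hpt
        rw [hBf, Finset.mem_filter] at hps
        have hne : p.2 = p.1 := by
          simp only [hP] at hpt
          rcases Nat.lt_trichotomy p.1 p.2 with h | h | h
          · exact absurd h hpt.2
          · omega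
          · exact absurd ⟨hpt.1, h⟩ hps
        obtain ⟨p1, p2⟩ := p
        simp only at hne
        subst hne
        simp only [hC]
        ring
    rw [← h1, ← h2]
  have hswap : ∑ p ∈ Bf, C p = ∑ p ∈ Uf, C (Prod.swap p) := by
    refine Finset.sum_nbij' (i := Prod.swap) (j := Prod.swap) ?_ ?_ ?_ ?_ ?_
    · intro p hp
      rw [hBf, Finset.mem_filter, hS, Finset.mem_product] at hp
      rw [hUf, Finset.mem_filter, hS, Finset.mem_product]
      exact ⟨⟨hp.1.2, hp.1.1⟩, hp.2⟩
    · intro p hp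
      rw [hUf, Finset.mem_filter, hS, Finset.mem_product] at hp
      rw [hBf, Finset.mem_filter, hS, Finset.mem_product]
      exact ⟨⟨hp.1.2, hp.1.1⟩, hp.2⟩
    · intro p _; exact Prod.swap_swap p
    · intro p _; exact Prod.swap_swap p
    · intro p _; rw [Prod.swap_swap]
  rw [hsplit, hswap, ← Finset.sum_add_distrib]
  refine Finset.sum_nonneg fun p hp => ?_
  rw [hUf, Finset.mem_filter] at hp
  have hij : p.1 < p.2 := hp.2
  have hw1 := W1 hnn hlc hsupp (p.1 + ℓ) (p.2 - p.1)
  have e1 : p.1 + ℓ + (p.2 - p.1) + 1 = p.2 + (ℓ + 1) := by omega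
  have e2 : p.1 + ℓ + 1 = p.1 + (ℓ + 1) := by omega
  have e3 : p.1 + ℓ + (p.2 - p.1) = p.2 + ℓ := by omega
  rw [e1, e2, e3] at hw1
  have htp := fW_tp2 hnn hlc hsupp n p.1 p.2 (le_of_lt hij)
  have hkey : C p + C (Prod.swap p)
      = (w (p.1 + ℓ) * w (p.2 + (ℓ + 1)) - w (p.1 + (ℓ + 1)) * w (p.2 + ℓ))
        * (fW w (n + 1) p.1 * fW w n p.2 - fW w (n + 1) p.2 * fW w n p.1) := by
    simp only [hC, Prod.fst_swap, Prod.snd_swap]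
    ring
  rw [hkey]
  have hX : w (p.1 + ℓ) * w (p.2 + (ℓ + 1)) - w (p.1 + (ℓ + 1)) * w (p.2 + ℓ) ≤ 0 := by
    nlinarith [hw1]
  have hY : fW w (n + 1) p.1 * fW w n p.2 - fW w (n + 1) p.2 * fW w n p.1 ≤ 0 := by
    nlinarith [htp]
  nlinarith [hX, hY]


theorem stmt13 (w : ℕ → ℝ) (hnn : ∀ i, 0 ≤ w i) (hw : 0 < w 0 * w 1)
    (hlc : ∀ i : ℕ, 1 ≤ i → w (i - 1) * w (i + 1) ≤ (w i) ^ 2)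
    (r : ℕ) (hr : 1 ≤ r) (hsupp : ∀ i : ℕ, w i ≠ 0 ↔ i ≤ r)
    (n : ℕ) (hn : 1 ≤ n) (ℓ : ℕ) (hℓ : ℓ + 2 ≤ r) :
    Zshift w (ℓ + 1) (n + 1) * Zshift w ℓ n ≤ Zshift w ℓ (n + 1) * Zshift w (ℓ + 1) n := by
  exact stmt13' w hnn hlc r hsupp n ℓ
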